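/- arXiv:1604.07260 — 8 statements merged into one kernel-verified Lean document; each statement's English description precedes it below -/
import Mathlib

section
/- Let X = ℓ^p for 1 < p < ∞ with canonical basis, let B ⊂ ℕ be finite with |B| = N, and let m ≤ N. Then D_m(1_B) = D*_m(1_B) = (N - m)^(1/p). -/
open ENNReal

/-! On the coordinates of `B \ A` every vector `1_B - t • v` with `v` supported on `A` equals `1`,
so its `p`-th power norm is at least `|B \ A| ≥ N - m`. For `A ⊆ B` the choice `t • v = 1_A`
attains this bound, since then `1_B - 1_A = 1_{B \ A}`. Signs play no role in either bound. -/

section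

variable {α : Type*} {p : ℝ≥0∞}

lemma lp.card_rpow_le_norm_of_eq_one [Fact (1 ≤ p)] (hp : 0 < p.toReal)
    (f : lp (fun _ : α => ℝ) p) (s : Finset α) (hf : ∀ k ∈ s, f k = 1) :
    (s.card : ℝ) ^ (1 / p.toReal) ≤ ‖f‖ := by
  rw [one_div, Real.rpow_inv_le_iff_of_pos (Nat.cast_nonneg _) (norm_nonneg _) hp]
  calc (s.card : ℝ) = ∑ k ∈ s, ‖f k‖ ^ p.toReal := by
        rw [Finset.sum_congr rfl fun k hk => by rw [hf k hk, norm_one, Real.one_rpow]]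
        simp
    _ ≤ ‖f‖ ^ p.toReal := lp.sum_rpow_le_norm_rpow hp f s

variable [DecidableEq α]

lemma lp.sum_single_one_apply (s : Finset α) (k : α) :
    (∑ n ∈ s, lp.single p n (1 : ℝ) : lp (fun _ : α => ℝ) p) k = if k ∈ s then 1 else 0 := by
  rw [lp.coeFn_sum, Finset.sum_apply]
  simp [Pi.single_apply]

lemma lp.sum_smul_single_one_apply_of_notMem (s : Finset α) (c : α → ℝ) {k : α} (hk : k ∉ s) :
    (∑ n ∈ s, c n • lp.single p n (1 : ℝ) : lp (fun _ : α => ℝ) p) k = 0 := by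
  rw [lp.coeFn_sum, Finset.sum_apply]
  simp [Pi.single_apply, hk]

variable [Fact (1 ≤ p)]

lemma lp.norm_sum_single_one (hp : 0 < p.toReal) (s : Finset α) :
    ‖(∑ n ∈ s, lp.single p n (1 : ℝ) : lp (fun _ : α => ℝ) p)‖ =
      (s.card : ℝ) ^ (1 / p.toReal) := by
  have h := lp.norm_sum_single (E := fun _ : α => ℝ) hp (fun _ => 1) s
  simp only [norm_one, Real.one_rpow, Finset.sum_const, nsmul_eq_mul, mul_one] at h
  rw [← h, one_div, Real.rpow_rpow_inv (norm_nonneg _) hp.ne']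

lemma lp.card_sdiff_rpow_le_infDist_span (hp : 0 < p.toReal) (B A : Finset α)
    (v : lp (fun _ : α => ℝ) p) (hv : ∀ k ∉ A, v k = 0) :
    ((B \ A).card : ℝ) ^ (1 / p.toReal) ≤
      Metric.infDist (∑ n ∈ B, lp.single p n (1 : ℝ)) (Submodule.span ℝ {v} : Set _) := by
  rw [Metric.le_infDist ⟨0, Submodule.zero_mem _⟩]
  rintro _ hy
  obtain ⟨t, rfl⟩ := Submodule.mem_span_singleton.1 hy
  rw [dist_eq_norm]
  refine lp.card_rpow_le_norm_of_eq_one hp _ _ fun k hk => ?_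
  obtain ⟨hkB, hkA⟩ := Finset.mem_sdiff.1 hk
  rw [lp.coeFn_sub, Pi.sub_apply, lp.coeFn_smul, Pi.smul_apply, lp.sum_single_one_apply,
    if_pos hkB, hv k hkA, smul_zero, sub_zero]

lemma lp.sub_card_rpow_le_infDist_span (hp : 0 < p.toReal) (B A : Finset α)
    (hAB : A.card ≤ B.card) (v : lp (fun _ : α => ℝ) p) (hv : ∀ k ∉ A, v k = 0) :
    ((B.card : ℝ) - A.card) ^ (1 / p.toReal) ≤
      Metric.infDist (∑ n ∈ B, lp.single p n (1 : ℝ)) (Submodule.span ℝ {v} : Set _) := by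
  refine le_trans ?_ (lp.card_sdiff_rpow_le_infDist_span hp B A v hv)
  have hcard : (B.card : ℝ) - A.card ≤ (B \ A).card := by
    rw [← Nat.cast_sub hAB]
    exact_mod_cast Finset.le_card_sdiff A B
  exact Real.rpow_le_rpow (sub_nonneg.2 (by exact_mod_cast hAB)) hcard (by positivity)

lemma lp.infDist_span_sum_single_one_of_subset (hp : 0 < p.toReal) {A B : Finset α}
    (hAB : A ⊆ B) :
    Metric.infDist (∑ n ∈ B, lp.single p n (1 : ℝ))
        (Submodule.span ℝ {(∑ n ∈ A, lp.single p n (1 : ℝ) : lp (fun _ : α => ℝ) p)} : Set _) =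
      ((B.card : ℝ) - A.card) ^ (1 / p.toReal) := by
  have hdist : dist (∑ n ∈ B, lp.single p n (1 : ℝ))
      (∑ n ∈ A, lp.single p n (1 : ℝ) : lp (fun _ : α => ℝ) p) =
        ((B.card : ℝ) - A.card) ^ (1 / p.toReal) := by
    rw [dist_eq_norm, ← Finset.sum_sdiff hAB, add_sub_cancel_right,
      lp.norm_sum_single_one hp, Finset.card_sdiff_of_subset hAB,
      Nat.cast_sub (Finset.card_le_card hAB)]
  refine le_antisymm ?_ (lp.sub_card_rpow_le_infDist_span hp B A (Finset.card_le_card hAB) _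
    fun k hk => by rw [lp.sum_single_one_apply, if_neg hk])
  exact hdist ▸ Metric.infDist_le_dist_of_mem (Submodule.mem_span_singleton_self _)

end

theorem stmt_2_general (p : ℝ≥0∞) [Fact (1 ≤ p)] (hptop : p ≠ ⊤)
    (B : Finset ℕ) (N m : ℕ) (hB : B.card = N) (hm : m ≤ N) :
    sInf {d : ℝ | ∃ A : Finset ℕ, A.card = m ∧
        d = Metric.infDist (∑ n ∈ B, lp.single p n (1 : ℝ))
          (Submodule.span ℝ {(∑ n ∈ A, lp.single p n (1 : ℝ) :
            lp (fun _ : ℕ => ℝ) p)} : Set (lp (fun _ : ℕ => ℝ) p))} =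
      ((N : ℝ) - m) ^ (1 / p.toReal) ∧
    sInf {d : ℝ | ∃ (A : Finset ℕ) (ε : ℕ → ℝ), A.card = m ∧
        (∀ n ∈ A, ε n = 1 ∨ ε n = -1) ∧
        d = Metric.infDist (∑ n ∈ B, lp.single p n (1 : ℝ))
          (Submodule.span ℝ {(∑ n ∈ A, ε n • lp.single p n (1 : ℝ) :
            lp (fun _ : ℕ => ℝ) p)} : Set (lp (fun _ : ℕ => ℝ) p))} =
      ((N : ℝ) - m) ^ (1 / p.toReal) := by
  have hp : 0 < p.toReal :=
    ENNReal.toReal_pos (zero_lt_one.trans_le Fact.out).ne' hptop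
  subst hB
  obtain ⟨A₀, hA₀B, rfl⟩ := Finset.exists_subset_card_eq hm
  have hA₀ := (lp.infDist_span_sum_single_one_of_subset hp hA₀B).symm
  constructor
  · refine IsLeast.csInf_eq ⟨⟨A₀, rfl, hA₀⟩, ?_⟩
    rintro _ ⟨A, hA, rfl⟩
    rw [← hA]
    exact lp.sub_card_rpow_le_infDist_span hp B A (hA ▸ hm) _
      fun k hk => by rw [lp.sum_single_one_apply, if_neg hk]
  · refine IsLeast.csInf_eq
      ⟨⟨A₀, fun _ => 1, rfl, fun _ _ => Or.inl rfl, by simpa using hA₀⟩, ?_⟩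
    rintro _ ⟨A, ε, hA, -, rfl⟩
    rw [← hA]
    exact lp.sub_card_rpow_le_infDist_span hp B A (hA ▸ hm) _
      fun k hk => lp.sum_smul_single_one_apply_of_notMem A ε hk

/-- Proposition 2.2, case `m ≤ N`: in `ℓ^p` (`1 < p < ∞`) with the canonical basis,
for `|B| = N` and `m ≤ N`, `D_m(1_B) = D*_m(1_B) = (N-m)^(1/p)`, where `D_m` (resp. `D*_m`)
is the infimum of the distances from `1_B` to the one-dimensional subspaces `[1_A]`
(resp. `[1_{εA}]`) with `|A| = m`. -/
theorem stmt_2 (p : ℝ≥0∞) [Fact (1 ≤ p)] (hp : 1 < p) (hptop : p ≠ ⊤)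
    (B : Finset ℕ) (N m : ℕ) (hB : B.card = N) (hm : m ≤ N) :
    sInf {d : ℝ | ∃ A : Finset ℕ, A.card = m ∧
        d = Metric.infDist (∑ n ∈ B, lp.single p n (1 : ℝ))
          (Submodule.span ℝ {(∑ n ∈ A, lp.single p n (1 : ℝ) :
            lp (fun _ : ℕ => ℝ) p)} : Set (lp (fun _ : ℕ => ℝ) p))} =
      ((N : ℝ) - m) ^ (1 / p.toReal) ∧
    sInf {d : ℝ | ∃ (A : Finset ℕ) (ε : ℕ → ℝ), A.card = m ∧
        (∀ n ∈ A, ε n = 1 ∨ ε n = -1) ∧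
        d = Metric.infDist (∑ n ∈ B, lp.single p n (1 : ℝ))
          (Submodule.span ℝ {(∑ n ∈ A, ε n • lp.single p n (1 : ℝ) :
            lp (fun _ : ℕ => ℝ) p)} : Set (lp (fun _ : ℕ => ℝ) p))} =
      ((N : ℝ) - m) ^ (1 / p.toReal) :=
  stmt_2_general p hptop B N m hB hm
end

section
/- Let X = ℓ^1 with canonical basis and B ⊂ ℕ finite with |B| = N. Then D_m(1_B) = N - m if m ≤ N, D_m(1_B) = m - N if N ≤ m ≤ 2N, and D_m(1_B) = N if m ≥ 2N. -/
/-!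
With `k = #(B ∩ A)`, the `ℓ¹` norm of `1_B - α 1_A` is `#(B \ A) + k |1 - α| + #(A \ B) |α|`.
Since `|1 - α| + |α| ≥ 1`, this is at least `#(B \ A) + min k #(A \ B) = min N (#(B \ A) + #(A \ B))`,
which is `≥ min N |N - m|`. The bound is attained at `α = 0` (value `N`, for any `A`) and at
`α = 1` for `A` nested with `B` (value `|N - m|`). Hence `D_m(1_B) = min N |N - m|`, which is the
three-case formula.
-/

open Finset

section

variable {ι : Type*} [DecidableEq ι]

noncomputable def l1Indicator (A : Finset ι) : lp (fun _ : ι => ℝ) 1 :=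
  ∑ n ∈ A, lp.single 1 n 1

theorem norm_l1Indicator_sub_smul (B A : Finset ι) (α : ℝ) :
    ‖l1Indicator B - α • l1Indicator A‖ = #(B \ A) + #(B ∩ A) * |1 - α| + #(A \ B) * |α| := by
  set f : ι → ℝ := fun n => (if n ∈ B then 1 else 0) - α * if n ∈ A then 1 else 0
  have hsum : l1Indicator B - α • l1Indicator A = ∑ n ∈ B ∪ A, lp.single 1 n (f n) := by
    refine lp.ext (funext fun j => ?_)
    simp only [l1Indicator, f, lp.coeFn_sub, lp.coeFn_smul, lp.coeFn_sum, Pi.sub_apply,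
      Pi.smul_apply, Finset.sum_apply, lp.single_apply, Finset.sum_pi_single, smul_eq_mul,
      Finset.mem_union]
    by_cases hB : j ∈ B <;> by_cases hA : j ∈ A <;> simp [hB, hA]
  have hnorm := lp.norm_sum_single (p := 1) (by norm_num) f (B ∪ A)
  simp only [ENNReal.toReal_one, Real.rpow_one] at hnorm
  rw [hsum, hnorm, ← union_sdiff_self_eq_union, sum_union disjoint_sdiff, ← sdiff_union_inter B A,
    sum_union (disjoint_sdiff_inter B A), sdiff_union_inter,
    sum_eq_card_nsmul (b := 1), sum_eq_card_nsmul (b := |1 - α|), sum_eq_card_nsmul (b := |α|)]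
  · simp only [nsmul_eq_mul, mul_one]
  all_goals
    intro n hn
    simp only [mem_sdiff, mem_inter] at hn
    simp [f, hn, Real.norm_eq_abs]

theorem min_le_mul_abs_one_sub_add_mul_abs {k c : ℝ} (hk : 0 ≤ k) (hc : 0 ≤ c) (α : ℝ) :
    min k c ≤ k * |1 - α| + c * |α| :=
  calc min k c ≤ min k c * (|1 - α| + |α|) := by
        have : 1 ≤ |1 - α| + |α| := by simpa using abs_add_le (1 - α) α
        nlinarith [le_min hk hc]
    _ ≤ k * |1 - α| + c * |α| := by
        rw [mul_add]
        gcongr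
        exacts [min_le_left k c, min_le_right k c]

theorem min_card_abs_sub_card_le_norm (B A : Finset ι) (α : ℝ) :
    min (#B : ℝ) |#B - #A| ≤ ‖l1Indicator B - α • l1Indicator A‖ := by
  have hB : (#B : ℝ) = #(B \ A) + #(B ∩ A) := mod_cast (card_sdiff_add_card_inter B A).symm
  have hA : (#A : ℝ) = #(A \ B) + #(B ∩ A) := by
    rw [inter_comm]; exact_mod_cast (card_sdiff_add_card_inter A B).symm
  have hmin := min_le_mul_abs_one_sub_add_mul_abs (k := #(B ∩ A)) (c := #(A \ B))
    (by positivity) (by positivity) α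
  rw [norm_l1Indicator_sub_smul, hB, hA]
  rcases min_choice (#(B ∩ A) : ℝ) #(A \ B) with h | h <;> rw [h] at hmin
  · exact min_le_of_left_le (by linarith)
  · have hsymm : |(#(B \ A) : ℝ) + #(B ∩ A) - (#(A \ B) + #(B ∩ A))| ≤ #(B \ A) + #(A \ B) := by
      rw [abs_sub_le_iff]; constructor <;> linarith [(#(B \ A)).cast_nonneg (α := ℝ),
        (#(A \ B)).cast_nonneg (α := ℝ)]
    exact min_le_of_right_le (by linarith)

theorem norm_l1Indicator (B : Finset ι) : ‖l1Indicator B‖ = #B := by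
  simpa using norm_l1Indicator_sub_smul B ∅ 0

theorem norm_l1Indicator_sub_l1Indicator (B A : Finset ι) :
    ‖l1Indicator B - l1Indicator A‖ = #(B \ A) + #(A \ B) := by
  simpa using norm_l1Indicator_sub_smul B A 1

theorem exists_card_eq_card_sdiff_add_card_sdiff [Infinite ι] (B : Finset ι) (m : ℕ) :
    ∃ A : Finset ι, #A = m ∧ (#(B \ A) + #(A \ B) : ℝ) = |(#B : ℝ) - m| := by
  rcases le_total m #B with hm | hm
  · obtain ⟨A, hAB, hA⟩ := exists_subset_card_eq hm
    refine ⟨A, hA, ?_⟩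
    rw [sdiff_eq_empty_iff_subset.2 hAB, card_sdiff_of_subset hAB, hA, abs_of_nonneg (by simpa)]
    push_cast [hm, card_empty]; ring
  · obtain ⟨A, hBA, hA⟩ := Infinite.exists_superset_card_eq B m hm
    refine ⟨A, hA, ?_⟩
    rw [sdiff_eq_empty_iff_subset.2 hBA, card_sdiff_of_subset hBA, hA, abs_of_nonpos (by simpa)]
    push_cast [hm, card_empty]; ring

theorem isLeast_norm_l1Indicator_sub_smul [Infinite ι] (B : Finset ι) (m : ℕ) :
    IsLeast {d : ℝ | ∃ (A : Finset ι) (α : ℝ), #A = m ∧ d = ‖l1Indicator B - α • l1Indicator A‖}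
      (min (#B : ℝ) |#B - m|) := by
  refine ⟨?_, ?_⟩
  · obtain ⟨A, hA, hsdiff⟩ := exists_card_eq_card_sdiff_add_card_sdiff B m
    rcases min_choice (#B : ℝ) |#B - m| with h | h <;> rw [h]
    · exact ⟨A, 0, hA, by rw [zero_smul, sub_zero, norm_l1Indicator]⟩
    · exact ⟨A, 1, hA, by rw [one_smul, norm_l1Indicator_sub_l1Indicator, hsdiff]⟩
  · rintro d ⟨A, α, rfl, rfl⟩
    exact min_card_abs_sub_card_le_norm B A α

end

/-- Remark after Proposition 2.2: in `ℓ¹` with the canonical basis, for `|B| = N`,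
`D_m(1_B) = N - m` if `m ≤ N`, `= m - N` if `N ≤ m ≤ 2N`, and `= N` if `m ≥ 2N`,
where `D_m(x) = inf {‖x - α 1_A‖ : |A| = m, α ∈ ℝ}`. -/
theorem stmt_4 (B : Finset ℕ) (N : ℕ) (hB : B.card = N) (D : ℕ → ℝ)
    (hD : ∀ m : ℕ, D m = sInf {d : ℝ | ∃ (A : Finset ℕ) (α : ℝ), A.card = m ∧
      d = ‖(∑ n ∈ B, lp.single 1 n (1 : ℝ)) -
            α • ∑ n ∈ A, lp.single 1 n (1 : ℝ)‖}) :
    ∀ m : ℕ, (m ≤ N → D m = (N : ℝ) - m) ∧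
      (N ≤ m → m ≤ 2 * N → D m = (m : ℝ) - N) ∧
      (2 * N ≤ m → D m = (N : ℝ)) := by
  have hDm : ∀ m : ℕ, D m = min (N : ℝ) |N - m| := fun m => by
    rw [hD m, ← hB]
    exact (isLeast_norm_l1Indicator_sub_smul B m).csInf_eq
  intro m
  simp only [hDm]
  refine ⟨fun hm => ?_, fun hm hm2 => ?_, fun hm => ?_⟩
  · have : (m : ℝ) ≤ N := mod_cast hm
    rw [abs_of_nonneg (by linarith), min_eq_right (by linarith)]
  · have : (N : ℝ) ≤ m := mod_cast hm
    have : (m : ℝ) ≤ 2 * N := mod_cast hm2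
    rw [abs_of_nonpos (by linarith), min_eq_right (by linarith)]
    ring
  · have : 2 * (N : ℝ) ≤ m := mod_cast hm
    rw [abs_of_nonpos (by linarith), min_eq_left (by linarith)]
end

section
/- Let H be a Hilbert space with orthonormal basis (e_n) and let x ∈ H be finitely supported with |supp(x)| = N. Then for every m ≥ N, ‖x‖·sqrt(1 − N/m) ≤ D*_m(x) ≤ ‖x‖. -/
/-!
If `u = ∑_{n ∈ A} ε_n e_n` is a sign vector on `m` coordinates, then `‖u‖² = m`, while
`⟪x, u⟫` only sees the at most `N` coordinates of `A` in the support of `x`, so Cauchy–Schwarz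
gives `⟪x, u⟫² ≤ N ‖x‖²`. The distance from `x` to the line `ℝ u` is
`(‖x‖² - ⟪x, u⟫² / ‖u‖²)^{1/2}`, which is therefore at least `‖x‖ (1 - N/m)^{1/2}`.
The upper bound is the choice `α = 0`.
-/

section

open Finset
open scoped RealInnerProductSpace

variable {E ι : Type*} [NormedAddCommGroup E] [InnerProductSpace ℝ E]

theorem norm_mul_sqrt_one_sub_div_le_norm_sub_smul {x u : E} {N : ℝ}
    (hxu : ⟪x, u⟫ ^ 2 ≤ N * ‖x‖ ^ 2) (α : ℝ) :
    ‖x‖ * √(1 - N / ‖u‖ ^ 2) ≤ ‖x - α • u‖ := by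
  have key : ‖x‖ ^ 2 * (1 - N / ‖u‖ ^ 2) ≤ ‖x - α • u‖ ^ 2 := by
    rcases eq_or_ne u 0 with rfl | hu
    · simp
    have hu2 : 0 < ‖u‖ ^ 2 := by positivity
    refine le_of_mul_le_mul_left ?_ hu2
    rw [norm_sub_sq_real, real_inner_smul_right, norm_smul, mul_pow, Real.norm_eq_abs, sq_abs,
      mul_one_sub, ← mul_div_assoc, mul_sub, mul_div_cancel₀ _ hu2.ne']
    nlinarith [sq_nonneg (α * ‖u‖ ^ 2 - ⟪x, u⟫)]
  calc ‖x‖ * √(1 - N / ‖u‖ ^ 2) = √(‖x‖ ^ 2 * (1 - N / ‖u‖ ^ 2)) := by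
        rw [Real.sqrt_mul (sq_nonneg _), Real.sqrt_sq (norm_nonneg _)]
    _ ≤ √(‖x - α • u‖ ^ 2) := Real.sqrt_le_sqrt key
    _ = ‖x - α • u‖ := Real.sqrt_sq (norm_nonneg _)

theorem inner_sum_smul_eq_inter [DecidableEq ι] {x : E} {v : ι → E} {S : Finset ι}
    (hS : ∀ i ∉ S, ⟪x, v i⟫ = 0) (A : Finset ι) (c : ι → ℝ) :
    ⟪x, ∑ i ∈ A, c i • v i⟫ = ⟪x, ∑ i ∈ A ∩ S, c i • v i⟫ := by
  simp only [inner_sum, real_inner_smul_right]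
  refine (sum_subset inter_subset_left fun i hiA hiAS => ?_).symm
  rw [hS i fun hiS => hiAS (mem_inter.mpr ⟨hiA, hiS⟩), mul_zero]

namespace Orthonormal

variable {v : ι → E} {A : Finset ι} {ε : ι → ℝ}

theorem norm_sum_sign_smul_sq (hv : Orthonormal ℝ v) (hε : ∀ i ∈ A, ε i = 1 ∨ ε i = -1) :
    ‖∑ i ∈ A, ε i • v i‖ ^ 2 = #A := by
  rw [← real_inner_self_eq_norm_sq, hv.inner_sum, card_eq_sum_ones, Nat.cast_sum]
  refine sum_congr rfl fun i hi => ?_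
  rcases hε i hi with h | h <;> simp [h]

theorem inner_sum_sign_smul_sq_le [DecidableEq ι] (hv : Orthonormal ℝ v) {x : E} {S : Finset ι}
    (hS : ∀ i ∉ S, ⟪x, v i⟫ = 0) (hε : ∀ i ∈ A, ε i = 1 ∨ ε i = -1) :
    ⟪x, ∑ i ∈ A, ε i • v i⟫ ^ 2 ≤ #S * ‖x‖ ^ 2 := by
  rw [inner_sum_smul_eq_inter hS]
  set w := ∑ i ∈ A ∩ S, ε i • v i
  have hw : ‖w‖ ^ 2 = #(A ∩ S) :=
    hv.norm_sum_sign_smul_sq fun i hi => hε i (mem_inter.mp hi).1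
  have hcard : (#(A ∩ S) : ℝ) ≤ #S := by exact_mod_cast card_le_card inter_subset_right
  calc ⟪x, w⟫ ^ 2 ≤ (‖x‖ * ‖w‖) ^ 2 := by
        rw [← sq_abs]
        exact pow_le_pow_left₀ (abs_nonneg _) (abs_real_inner_le_norm x w) 2
    _ = #(A ∩ S) * ‖x‖ ^ 2 := by rw [mul_pow, hw, mul_comm]
    _ ≤ #S * ‖x‖ ^ 2 := by gcongr

end Orthonormal

end

theorem stmt_8_general {H : Type*} [NormedAddCommGroup H] [InnerProductSpace ℝ H]
    (e : HilbertBasis ℕ ℝ H) (x : H) (S : Finset ℕ) (N : ℕ)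
    (hS : ∀ n : ℕ, (inner ℝ x (e n) : ℝ) ≠ 0 ↔ n ∈ S) (hN : S.card = N)
    (m : ℕ) (Dstar : ℝ)
    (hD : Dstar = sInf {d : ℝ | ∃ (A : Finset ℕ) (ε : ℕ → ℝ) (α : ℝ), A.card = m ∧
      (∀ n ∈ A, ε n = 1 ∨ ε n = -1) ∧ d = ‖x - α • ∑ n ∈ A, ε n • e n‖}) :
    ‖x‖ * Real.sqrt (1 - (N : ℝ) / m) ≤ Dstar ∧ Dstar ≤ ‖x‖ := by
  have hsupp : ∀ n ∉ S, inner ℝ x (e n) = 0 := fun n hn => not_not.mp (mt (hS n).mp hn)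
  set T := {d : ℝ | ∃ (A : Finset ℕ) (ε : ℕ → ℝ) (α : ℝ), A.card = m ∧
      (∀ n ∈ A, ε n = 1 ∨ ε n = -1) ∧ d = ‖x - α • ∑ n ∈ A, ε n • e n‖}
  have hx_mem : ‖x‖ ∈ T :=
    ⟨Finset.range m, fun _ => 1, 0, Finset.card_range m, fun _ _ => Or.inl rfl, by simp⟩
  have hT_bdd : BddBelow T := ⟨0, by rintro d ⟨A, ε, α, -, -, rfl⟩; exact norm_nonneg _⟩
  subst hD
  refine ⟨le_csInf ⟨_, hx_mem⟩ ?_, csInf_le hT_bdd hx_mem⟩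
  rintro d ⟨A, ε, α, hA, hε, rfl⟩
  have h := norm_mul_sqrt_one_sub_div_le_norm_sub_smul
    (e.orthonormal.inner_sum_sign_smul_sq_le hsupp hε) α
  rwa [e.orthonormal.norm_sum_sign_smul_sq hε, hA, hN] at h

/-- In a Hilbert space with orthonormal basis `(e_n)`, if `x` is finitely supported with
`|supp(x)| = N`, then for every `m ≥ N`, `‖x‖ sqrt(1 - N/m) ≤ D*_m(x) ≤ ‖x‖`. -/
theorem stmt_8 {H : Type*} [NormedAddCommGroup H] [InnerProductSpace ℝ H] [CompleteSpace H]
    (e : HilbertBasis ℕ ℝ H) (x : H) (S : Finset ℕ) (N : ℕ)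
    (hS : ∀ n : ℕ, (inner ℝ x (e n) : ℝ) ≠ 0 ↔ n ∈ S) (hN : S.card = N)
    (m : ℕ) (hm : N ≤ m) (Dstar : ℝ)
    (hD : Dstar = sInf {d : ℝ | ∃ (A : Finset ℕ) (ε : ℕ → ℝ) (α : ℝ), A.card = m ∧
      (∀ n ∈ A, ε n = 1 ∨ ε n = -1) ∧ d = ‖x - α • ∑ n ∈ A, ε n • e n‖}) :
    ‖x‖ * Real.sqrt (1 - (N : ℝ) / m) ≤ Dstar ∧ Dstar ≤ ‖x‖ :=
  stmt_8_general e x S N hS hN m Dstar hD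
end

section
/- Let (e_n) be a Schauder basis of a Banach space X, x ∈ X, and A a finite subset of ℕ. Then sup_{B ⊆ A} ‖x + 1_B‖ ≤ sup{ ‖x + 1_{εA}‖ : ε ∈ {±1}^A } ≤ 3 · sup_{B ⊆ A} ‖x + 1_B‖. -/
/-!
Both inequalities come from two linear identities between the vectors `x + 1_B`, `B ⊆ A`, and
the signed vectors `x + 1_{εA}`. Averaging the all-plus sign with the sign that is `+1` on `B`
and `-1` on `A ∖ B` gives `2 (x + 1_B)`; conversely `x + 1_{εA} = 2 (x + 1_{A⁺}) - (x + 1_A)`,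
where `A⁺` is the set where `ε = 1`. The triangle inequality turns these into the two bounds.
-/

open Finset

section SignIdentities

variable {ι M : Type*} [AddCommGroup M] [Module ℝ M]

theorem add_sum_sign_smul_eq (x : M) (e : ι → M) (A : Finset ι) {ε : ι → ℝ}
    (hε : ∀ n ∈ A, ε n = 1 ∨ ε n = -1) :
    x + ∑ n ∈ A, ε n • e n = (2 : ℝ) • (x + ∑ n ∈ A with ε n = 1, e n) - (x + ∑ n ∈ A, e n) := by
  have hterm : ∀ n ∈ A, ε n • e n = (2 : ℝ) • (if ε n = 1 then e n else 0) - e n := by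
    intro n hn
    rcases hε n hn with h | h <;> norm_num [h, two_smul]
  rw [sum_congr rfl hterm, sum_sub_distrib, ← smul_sum, ← sum_filter]
  module

theorem add_sum_add_add_sum_sign_smul_eq [DecidableEq ι] (x : M) (e : ι → M) {A B : Finset ι}
    (hB : B ⊆ A) :
    (x + ∑ n ∈ A, e n) + (x + ∑ n ∈ A, (if n ∈ B then 1 else -1 : ℝ) • e n) =
      (2 : ℝ) • (x + ∑ n ∈ B, e n) := by
  have hterm : ∀ n ∈ A, e n + (if n ∈ B then 1 else -1 : ℝ) • e n =
      if n ∈ B then (2 : ℝ) • e n else 0 := by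
    intro n _
    by_cases h : n ∈ B <;> simp [h, two_smul]
  have hsum : ∑ n ∈ A, (e n + (if n ∈ B then 1 else -1 : ℝ) • e n) = (2 : ℝ) • ∑ n ∈ B, e n := by
    rw [sum_congr rfl hterm, sum_ite_mem, inter_eq_right.mpr hB, smul_sum]
  rw [smul_add, ← hsum, sum_add_distrib, two_smul]
  abel

end SignIdentities

theorem bddAbove_norm_add_sum_subset {ι X : Type*} [SeminormedAddCommGroup X] (x : X)
    (e : ι → X) (A : Finset ι) :
    BddAbove {v : ℝ | ∃ B : Finset ι, B ⊆ A ∧ v = ‖x + ∑ n ∈ B, e n‖} := by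
  refine ((A.powerset.finite_toSet.image fun B => ‖x + ∑ n ∈ B, e n‖).bddAbove).mono ?_
  rintro v ⟨B, hB, rfl⟩
  exact ⟨B, mem_powerset.mpr hB, rfl⟩

section Norms

variable {ι X : Type*} [NormedAddCommGroup X] [NormedSpace ℝ X]

theorem norm_add_sum_sign_smul_le (x : X) (e : ι → X) (A : Finset ι) {ε : ι → ℝ}
    (hε : ∀ n ∈ A, ε n = 1 ∨ ε n = -1) :
    ‖x + ∑ n ∈ A, ε n • e n‖ ≤ 2 * ‖x + ∑ n ∈ A with ε n = 1, e n‖ + ‖x + ∑ n ∈ A, e n‖ := by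
  rw [add_sum_sign_smul_eq x e A hε]
  refine (norm_sub_le _ _).trans_eq ?_
  rw [norm_smul, Real.norm_two]

theorem norm_add_sum_le_of_subset [DecidableEq ι] (x : X) (e : ι → X) {A B : Finset ι}
    (hB : B ⊆ A) :
    ‖x + ∑ n ∈ B, e n‖ ≤
      (‖x + ∑ n ∈ A, e n‖ + ‖x + ∑ n ∈ A, (if n ∈ B then 1 else -1 : ℝ) • e n‖) / 2 := by
  have h := norm_add_le (x + ∑ n ∈ A, e n) (x + ∑ n ∈ A, (if n ∈ B then 1 else -1 : ℝ) • e n)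
  rw [add_sum_add_add_sum_sign_smul_eq x e hB, norm_smul, Real.norm_two] at h
  linarith

theorem norm_add_sum_sign_smul_le_three_mul_sSup (x : X) (e : ι → X) (A : Finset ι)
    {ε : ι → ℝ} (hε : ∀ n ∈ A, ε n = 1 ∨ ε n = -1) :
    ‖x + ∑ n ∈ A, ε n • e n‖ ≤
      3 * sSup {v : ℝ | ∃ B : Finset ι, B ⊆ A ∧ v = ‖x + ∑ n ∈ B, e n‖} := by
  have hbdd := bddAbove_norm_add_sum_subset x e A
  have hpos : ‖x + ∑ n ∈ A with ε n = 1, e n‖ ≤ sSup _ :=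
    le_csSup hbdd ⟨_, filter_subset _ A, rfl⟩
  have hall : ‖x + ∑ n ∈ A, e n‖ ≤ sSup _ := le_csSup hbdd ⟨A, subset_rfl, rfl⟩
  linarith [norm_add_sum_sign_smul_le x e A hε]

theorem norm_add_sum_le_sSup_sign_smul [DecidableEq ι] (x : X) (e : ι → X) {A B : Finset ι}
    (hB : B ⊆ A)
    (hbdd : BddAbove {v : ℝ | ∃ ε : ι → ℝ, (∀ n ∈ A, ε n = 1 ∨ ε n = -1) ∧
      v = ‖x + ∑ n ∈ A, ε n • e n‖}) :
    ‖x + ∑ n ∈ B, e n‖ ≤ sSup {v : ℝ | ∃ ε : ι → ℝ, (∀ n ∈ A, ε n = 1 ∨ ε n = -1) ∧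
      v = ‖x + ∑ n ∈ A, ε n • e n‖} := by
  have hplus : ‖x + ∑ n ∈ A, e n‖ ≤ sSup _ :=
    le_csSup hbdd ⟨fun _ => 1, fun _ _ => Or.inl rfl, by simp only [one_smul]⟩
  have hsign : ‖x + ∑ n ∈ A, (if n ∈ B then 1 else -1 : ℝ) • e n‖ ≤ sSup _ :=
    le_csSup hbdd ⟨_, fun n _ => by by_cases h : n ∈ B <;> simp [h], rfl⟩
  linarith [norm_add_sum_le_of_subset x e hB]

end Norms

/-- Lemma 3.3, second part: for a basis `(e_n)` of `X`, `x ∈ X` and `A` finite,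
`sup_{B ⊆ A} ‖x + 1_B‖ ≤ sup {‖x + 1_{εA}‖ : ε ∈ {±1}^A} ≤ 3 sup_{B ⊆ A} ‖x + 1_B‖`. -/
theorem stmt_12 {X : Type*} [NormedAddCommGroup X] [NormedSpace ℝ X]
    (e : ℕ → X) (x : X) (A : Finset ℕ) :
    sSup {v : ℝ | ∃ B : Finset ℕ, B ⊆ A ∧ v = ‖x + ∑ n ∈ B, e n‖} ≤
        sSup {v : ℝ | ∃ ε : ℕ → ℝ, (∀ n ∈ A, ε n = 1 ∨ ε n = -1) ∧
          v = ‖x + ∑ n ∈ A, ε n • e n‖} ∧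
      sSup {v : ℝ | ∃ ε : ℕ → ℝ, (∀ n ∈ A, ε n = 1 ∨ ε n = -1) ∧
          v = ‖x + ∑ n ∈ A, ε n • e n‖} ≤
        3 * sSup {v : ℝ | ∃ B : Finset ℕ, B ⊆ A ∧ v = ‖x + ∑ n ∈ B, e n‖} := by
  have hsigns : ∀ v ∈ {v : ℝ | ∃ ε : ℕ → ℝ, (∀ n ∈ A, ε n = 1 ∨ ε n = -1) ∧
      v = ‖x + ∑ n ∈ A, ε n • e n‖},
      v ≤ 3 * sSup {v : ℝ | ∃ B : Finset ℕ, B ⊆ A ∧ v = ‖x + ∑ n ∈ B, e n‖} := by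
    rintro v ⟨ε, hε, rfl⟩
    exact norm_add_sum_sign_smul_le_three_mul_sSup x e A hε
  refine ⟨csSup_le ⟨_, ∅, empty_subset A, rfl⟩ ?_,
    csSup_le ⟨_, fun _ => 1, fun _ _ => Or.inl rfl, rfl⟩ hsigns⟩
  rintro v ⟨B, hB, rfl⟩
  exact norm_add_sum_le_sSup_sign_smul x e hB ⟨_, hsigns⟩
end

section
/- Let (e_n) be a C-suppression unconditional basis of a Banach space X. Let x be finitely supported, A ⊆ supp(x), and set ε_n = e*_n(x)/|e*_n(x)| for n ∈ A. Then for every B ⊆ supp(x)∖A and every real t with 0 ≤ t ≤ min{|e*_n(x)| : n ∈ A}, ‖ Σ_{n∈B} e*_n(x) e_n + t·1_{εA} ‖ ≤ C ‖x‖. -/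
/-!
The vector in question is `∑_{n ∈ B ∪ A} c_n e*_n(x) e_n` with weights `c_n = 1` on `B` and
`c_n = t / |e*_n(x)| ∈ [0, 1]` on `A`. Such a sum lies in the convex hull of the projections
`P_M x`, `M ⊆ B ∪ A`, all of which lie in the convex ball of radius `C ‖x‖`.
-/

open Filter

/-- Peeling off one index `m`, `∑ c • a` is the convex combination, with weights `c m` and
`1 - c m`, of the same sum over the remaining indices with and without `a m` added; the first
of these lies in the translate `K - a m`, to which the induction hypothesis applies. -/
theorem Convex.sum_smul_mem_of_forall_subset_sum_mem {𝕜 E ι : Type*} [Ring 𝕜] [PartialOrder 𝕜]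
    [IsOrderedRing 𝕜] [AddCommGroup E] [Module 𝕜 E] [DecidableEq ι]
    {K : Set E} (hK : Convex 𝕜 K) (a : ι → E) {c : ι → 𝕜} {s : Finset ι}
    (hc : ∀ n ∈ s, c n ∈ Set.Icc 0 1) (hs : ∀ M ⊆ s, ∑ n ∈ M, a n ∈ K) :
    ∑ n ∈ s, c n • a n ∈ K := by
  induction s using Finset.induction_on generalizing K with
  | empty => simpa using hs ∅ le_rfl
  | @insert m s hm ih =>
    obtain ⟨hcm₀, hcm₁⟩ := hc m (s.mem_insert_self m)
    have hc' : ∀ n ∈ s, c n ∈ Set.Icc 0 1 := fun n hn => hc n (Finset.mem_insert_of_mem hn)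
    have with_m : a m + ∑ n ∈ s, c n • a n ∈ K :=
      ih (hK.translate_preimage_right (a m)) hc' fun M hM => by
        simpa [Finset.sum_insert fun h => hm (hM h)] using
          hs (insert m M) (Finset.insert_subset_insert m hM)
    have without_m : ∑ n ∈ s, c n • a n ∈ K :=
      ih hK hc' fun M hM => hs M (hM.trans (s.subset_insert m))
    convert hK with_m without_m hcm₀ (sub_nonneg.2 hcm₁) (add_sub_cancel _ _) using 1
    rw [Finset.sum_insert hm, smul_add, sub_smul, one_smul]
    abel

theorem stmt_13_general {X : Type*} [NormedAddCommGroup X] [NormedSpace ℝ X]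
    (e : ℕ → X) (f : ℕ → X →L[ℝ] ℝ)
    (C : ℝ)
    (hsu : ∀ (z : X) (M : Finset ℕ), ‖∑ n ∈ M, f n z • e n‖ ≤ C * ‖z‖)
    (x : X) (S : Finset ℕ)
    (A : Finset ℕ)
    (B : Finset ℕ) (hB : B ⊆ S \ A)
    (t : ℝ) (ht0 : 0 ≤ t) (ht : ∀ n ∈ A, t ≤ |f n x|) :
    ‖(∑ n ∈ B, f n x • e n) + t • ∑ n ∈ A, (f n x / |f n x|) • e n‖ ≤ C * ‖x‖ := by
  classical
  have hBA : Disjoint B A := Finset.disjoint_left.2 fun n hn => (Finset.mem_sdiff.1 (hB hn)).2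
  -- Where `f n x = 0` the weight is `t / 0 = 0`, still in `[0, 1]`.
  let c : ℕ → ℝ := fun n => if n ∈ B then 1 else t / |f n x|
  have hsum : (∑ n ∈ B, f n x • e n) + t • ∑ n ∈ A, (f n x / |f n x|) • e n
      = ∑ n ∈ B ∪ A, c n • f n x • e n := by
    rw [Finset.sum_union hBA, Finset.smul_sum]
    congr 1
    · exact Finset.sum_congr rfl fun n hn => by simp [c, hn]
    · refine Finset.sum_congr rfl fun n hn => ?_
      simp only [c, if_neg (Finset.disjoint_right.1 hBA hn), smul_smul]
      congr 1
      ring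
  have hc : ∀ n ∈ B ∪ A, c n ∈ Set.Icc 0 1 := by
    intro n hn
    by_cases hnB : n ∈ B
    · simp [c, hnB]
    · have hnA : n ∈ A := (Finset.mem_union.1 hn).resolve_left hnB
      simp only [c, if_neg hnB]
      exact ⟨by positivity, div_le_one_of_le₀ (ht n hnA) (abs_nonneg _)⟩
  rw [hsum, ← mem_closedBall_zero_iff]
  exact (convex_closedBall 0 _).sum_smul_mem_of_forall_subset_sum_mem _ hc
    fun M _ => mem_closedBall_zero_iff.2 (hsu x M)

/-- Proposition 3.5: if `(e_n)` is a `C`-suppression unconditional basis of `X`, `x` is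
finitely supported with support `S`, `A ⊆ S`, `ε_n = sign(f_n(x))` on `A`, then for every
`B ⊆ S \ A` and `0 ≤ t ≤ min {|f_n(x)| : n ∈ A}`,
`‖∑_{n∈B} f_n(x) e_n + t 1_{εA}‖ ≤ C ‖x‖`. -/
theorem stmt_13 {X : Type*} [NormedAddCommGroup X] [NormedSpace ℝ X] [CompleteSpace X]
    (e : ℕ → X) (f : ℕ → X →L[ℝ] ℝ)
    (hbi : ∀ m n : ℕ, f m (e n) = if m = n then 1 else 0)
    (hexp : ∀ z : X, Tendsto (fun N => ∑ n ∈ Finset.range N, f n z • e n) atTop (nhds z))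
    (C : ℝ)
    (hsu : ∀ (z : X) (M : Finset ℕ), ‖∑ n ∈ M, f n z • e n‖ ≤ C * ‖z‖)
    (x : X) (S : Finset ℕ) (hS : ∀ n : ℕ, f n x ≠ 0 ↔ n ∈ S)
    (A : Finset ℕ) (hA : A ⊆ S)
    (B : Finset ℕ) (hB : B ⊆ S \ A)
    (t : ℝ) (ht0 : 0 ≤ t) (ht : ∀ n ∈ A, t ≤ |f n x|) :
    ‖(∑ n ∈ B, f n x • e n) + t • ∑ n ∈ A, (f n x / |f n x|) • e n‖ ≤ C * ‖x‖ :=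
  stmt_13_general e f C hsu x S A B hB t ht0 ht
end

section
/- If a Schauder basis B of a Banach space X has Property (Q) with constant C, then B is C-democratic and C-suppression unconditional. Conversely, if B is D-democratic and C-suppression unconditional, then B has Property (Q) with constant C(1+D). -/
open Filter

/-!
Property (Q) with `A = B = ∅` says that `‖x‖ ≤ C ‖x + y‖` whenever `x` and `y` have disjoint
supports and `‖x‖_∞ ≤ 1`; by homogeneity the bound on `x` can be dropped, which is suppression
unconditionality on finitely supported vectors, and it passes to all of `X` through the basis
expansion. Taking `x = 1_{A ∩ B}`, `y = 0` and the sets `A \ B`, `B \ A` gives democracy.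
Conversely, for `z = x + y + 1_B` both `x` and `1_B` are coordinate projections of `z`, so
`‖x + 1_A‖ ≤ ‖x‖ + D ‖1_B‖ ≤ C (1 + D) ‖z‖`.
-/

/-- The vector with finitely many coefficients `c` with respect to the sequence `(e_n)`. -/
noncomputable def vec {X : Type*} [NormedAddCommGroup X] [NormedSpace ℝ X]
    (e : ℕ → X) (c : ℕ →₀ ℝ) : X := ∑ n ∈ c.support, c n • e n

/-- Property (Q) with constant `C`: `‖x + 1_A‖ ≤ C ‖x + y + 1_B‖` for all finite `A, B`
with `|A| = |B|`, `A ∩ B = ∅`, and finitely supported `x, y` with disjoint supports,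
`‖x̃‖_∞ ≤ 1` and `supp(x+y) ∩ (A ∪ B) = ∅`. -/
def PropQ {X : Type*} [NormedAddCommGroup X] [NormedSpace ℝ X] (e : ℕ → X) (C : ℝ) : Prop :=
  ∀ (A B : Finset ℕ) (c d : ℕ →₀ ℝ), A.card = B.card → Disjoint A B →
    Disjoint c.support d.support → (∀ n, |c n| ≤ 1) →
    Disjoint (c.support ∪ d.support) (A ∪ B) →
    ‖vec e c + ∑ n ∈ A, e n‖ ≤ C * ‖vec e c + vec e d + ∑ n ∈ B, e n‖

section

variable {X : Type*} [NormedAddCommGroup X]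

def IsDemocratic (e : ℕ → X) (D : ℝ) : Prop :=
  ∀ A B : Finset ℕ, A.card = B.card → ‖∑ n ∈ A, e n‖ ≤ D * ‖∑ n ∈ B, e n‖

theorem IsDemocratic.one_le {e : ℕ → X} {D : ℝ} (hdem : IsDemocratic e D) {n : ℕ}
    (hn : e n ≠ 0) : 1 ≤ D := by
  have h := hdem {n} {n} rfl
  rw [Finset.sum_singleton] at h
  exact le_of_mul_le_mul_right (by simpa using h) (norm_pos_iff.mpr hn)

variable [NormedSpace ℝ X]

def IsSuppressionUnconditional (e : ℕ → X) (f : ℕ → X →L[ℝ] ℝ) (C : ℝ) : Prop :=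
  ∀ (z : X) (M : Finset ℕ), ‖∑ n ∈ M, f n z • e n‖ ≤ C * ‖z‖

variable {e : ℕ → X} {C D : ℝ}

theorem vec_eq_sum_of_support_subset (e : ℕ → X) {c : ℕ →₀ ℝ} {S : Finset ℕ}
    (h : c.support ⊆ S) : vec e c = ∑ n ∈ S, c n • e n :=
  Finset.sum_subset h fun n _ hn => by simp [Finsupp.notMem_support_iff.mp hn]

theorem vec_indicator (e : ℕ → X) (S : Finset ℕ) (a : ℕ → ℝ) :
    vec e (Finsupp.indicator S fun n _ => a n) = ∑ n ∈ S, a n • e n := by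
  rw [vec_eq_sum_of_support_subset e (Finsupp.support_indicator_subset _ _)]
  exact Finset.sum_congr rfl fun n hn => by rw [Finsupp.indicator_apply, dif_pos hn]

theorem apply_vec {f : ℕ → X →L[ℝ] ℝ} (hbi : ∀ m n : ℕ, f m (e n) = if m = n then 1 else 0)
    (c : ℕ →₀ ℝ) (m : ℕ) : f m (vec e c) = c m := by
  simp only [vec, map_sum, map_smul, hbi, smul_eq_mul, mul_ite, mul_one, mul_zero,
    Finset.sum_ite_eq, Finsupp.mem_support_iff, ite_not]
  split_ifs with h <;> simp [h]

theorem PropQ.isDemocratic (hQ : PropQ e C) : IsDemocratic e C := by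
  intro A B hcard
  classical
  have key := hQ (A \ B) (B \ A) (Finsupp.indicator (A ∩ B) fun _ _ => 1) 0
    (Finset.card_sdiff_comm hcard) disjoint_sdiff_sdiff (by simp)
    (fun n => by rw [Finsupp.indicator_apply]; split <;> simp)
    (by
      rw [Finsupp.support_zero, Finset.union_empty]
      refine Finset.disjoint_left.mpr fun n hn hAB => ?_
      have hn : n ∈ A ∩ B := by simpa using Finsupp.support_indicator_subset _ _ hn
      simp only [Finset.mem_inter] at hn
      simp only [Finset.mem_union, Finset.mem_sdiff] at hAB
      tauto)
  have hx : vec e (Finsupp.indicator (A ∩ B) fun _ _ => 1) = ∑ n ∈ A ∩ B, e n := by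
    simp only [vec_indicator, one_smul]
  have hy : vec e 0 = 0 := by simp [vec]
  rwa [hx, hy, add_zero, Finset.sum_inter_add_sum_sdiff, Finset.inter_comm,
    Finset.sum_inter_add_sum_sdiff] at key

theorem PropQ.norm_sum_le_of_abs_le_one (hQ : PropQ e C) (a : ℕ → ℝ) {M S : Finset ℕ}
    (hMS : M ⊆ S) (ha : ∀ n ∈ M, |a n| ≤ 1) :
    ‖∑ n ∈ M, a n • e n‖ ≤ C * ‖∑ n ∈ S, a n • e n‖ := by
  classical
  have hsupp : Disjoint (Finsupp.indicator M fun n _ => a n).support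
      (Finsupp.indicator (S \ M) fun n _ => a n).support :=
    (Finset.disjoint_sdiff.mono (Finsupp.support_indicator_subset _ _)
      (Finsupp.support_indicator_subset _ _))
  have key := hQ ∅ ∅ _ _ rfl (by simp) hsupp
    (fun n => by rw [Finsupp.indicator_apply]; split_ifs with h <;> simp [ha n, h]) (by simp)
  rwa [vec_indicator, vec_indicator, Finset.sum_empty, add_zero, add_zero, add_comm,
    Finset.sum_sdiff hMS] at key

theorem PropQ.norm_sum_le (hQ : PropQ e C) (a : ℕ → ℝ) {M S : Finset ℕ} (hMS : M ⊆ S) :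
    ‖∑ n ∈ M, a n • e n‖ ≤ C * ‖∑ n ∈ S, a n • e n‖ := by
  set t : ℝ := 1 + ∑ n ∈ M, |a n|
  have ht : 0 < t := by positivity
  have hbound : ∀ n ∈ M, |t⁻¹ * a n| ≤ 1 := fun n hn => by
    rw [abs_mul, abs_of_pos (inv_pos.mpr ht), inv_mul_le_one₀ ht]
    linarith [Finset.single_le_sum (fun i _ => abs_nonneg (a i)) hn]
  have key := hQ.norm_sum_le_of_abs_le_one (fun n => t⁻¹ * a n) hMS hbound
  simp only [mul_smul, ← Finset.smul_sum, norm_smul, Real.norm_eq_abs,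
    abs_of_pos (inv_pos.mpr ht)] at key
  rw [mul_left_comm] at key
  exact le_of_mul_le_mul_left key (inv_pos.mpr ht)

theorem PropQ.isSuppressionUnconditional (hQ : PropQ e C) {f : ℕ → X →L[ℝ] ℝ}
    (hexp : ∀ z : X, Tendsto (fun N => ∑ n ∈ Finset.range N, f n z • e n) atTop (nhds z)) :
    IsSuppressionUnconditional e f C := by
  intro z M
  obtain ⟨N₀, hN₀⟩ := Finset.exists_nat_subset_range M
  refine ge_of_tendsto (((hexp z).norm).const_mul C) ?_
  filter_upwards [eventually_ge_atTop N₀] with N hN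
  exact hQ.norm_sum_le (fun n => f n z) (hN₀.trans (Finset.range_subset_range.mpr hN))

theorem propQ_of_isDemocratic_of_isSuppressionUnconditional {f : ℕ → X →L[ℝ] ℝ}
    (hbi : ∀ m n : ℕ, f m (e n) = if m = n then 1 else 0)
    (hdem : IsDemocratic e D) (hsup : IsSuppressionUnconditional e f C) :
    PropQ e (C * (1 + D)) := by
  intro A B c d hcard _ hcd _ hsupp
  set z := vec e c + vec e d + ∑ n ∈ B, e n
  have hfz : ∀ n, f n z = c n + d n + if n ∈ B then 1 else 0 := fun n => by
    simp only [z, map_add, apply_vec hbi, map_sum, hbi, Finset.sum_ite_eq]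
  have hx : vec e c = ∑ n ∈ c.support, f n z • e n :=
    Finset.sum_congr rfl fun n hn => by
      have hd : d n = 0 := Finsupp.notMem_support_iff.mp (Finset.disjoint_left.mp hcd hn)
      have hB : n ∉ B := fun hB => Finset.disjoint_left.mp hsupp
        (Finset.mem_union_left _ hn) (Finset.mem_union_right _ hB)
      rw [hfz, hd, if_neg hB, add_zero, add_zero]
  have h1B : ∑ n ∈ B, e n = ∑ n ∈ B, f n z • e n :=
    Finset.sum_congr rfl fun n hn => by
      have hcd : c n = 0 ∧ d n = 0 := by
        simp only [← Finsupp.notMem_support_iff]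
        exact not_or.mp fun h => Finset.disjoint_left.mp hsupp (Finset.mem_union.mpr h)
          (Finset.mem_union_right _ hn)
      rw [hfz, hcd.1, hcd.2, if_pos hn, zero_add, zero_add, one_smul]
  have hD : 0 ≤ D :=
    zero_le_one.trans <| hdem.one_le (n := 0) fun h => by simpa [h] using hbi 0 0
  calc ‖vec e c + ∑ n ∈ A, e n‖ ≤ ‖vec e c‖ + ‖∑ n ∈ A, e n‖ := norm_add_le _ _
    _ ≤ C * ‖z‖ + D * (C * ‖z‖) := by
      gcongr
      · exact hx ▸ hsup z c.support
      · exact (hdem A B hcard).trans (mul_le_mul_of_nonneg_left (h1B ▸ hsup z B) hD)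
    _ = C * (1 + D) * ‖z‖ := by ring

end

theorem stmt_14_general {X : Type*} [NormedAddCommGroup X] [NormedSpace ℝ X]
    (e : ℕ → X) (f : ℕ → X →L[ℝ] ℝ)
    (hbi : ∀ m n : ℕ, f m (e n) = if m = n then 1 else 0)
    (hexp : ∀ z : X, Tendsto (fun N => ∑ n ∈ Finset.range N, f n z • e n) atTop (nhds z))
    (C D : ℝ) :
    (PropQ e C →
      (∀ A B : Finset ℕ, A.card = B.card → ‖∑ n ∈ A, e n‖ ≤ C * ‖∑ n ∈ B, e n‖) ∧
      (∀ (z : X) (M : Finset ℕ), ‖∑ n ∈ M, f n z • e n‖ ≤ C * ‖z‖)) ∧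
    ((∀ A B : Finset ℕ, A.card = B.card → ‖∑ n ∈ A, e n‖ ≤ D * ‖∑ n ∈ B, e n‖) →
      (∀ (z : X) (M : Finset ℕ), ‖∑ n ∈ M, f n z • e n‖ ≤ C * ‖z‖) →
      PropQ e (C * (1 + D))) :=
  ⟨fun hQ => ⟨hQ.isDemocratic, hQ.isSuppressionUnconditional hexp⟩,
    fun hdem hsup => propQ_of_isDemocratic_of_isSuppressionUnconditional hbi hdem hsup⟩

/-- Remark 1.2: Property (Q) with constant `C` implies that the basis is `C`-democratic and
`C`-suppression unconditional; conversely a `D`-democratic and `C`-suppression unconditional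
basis has Property (Q) with constant `C(1+D)`. -/
theorem stmt_14 {X : Type*} [NormedAddCommGroup X] [NormedSpace ℝ X] [CompleteSpace X]
    (e : ℕ → X) (f : ℕ → X →L[ℝ] ℝ)
    (hbi : ∀ m n : ℕ, f m (e n) = if m = n then 1 else 0)
    (hexp : ∀ z : X, Tendsto (fun N => ∑ n ∈ Finset.range N, f n z • e n) atTop (nhds z))
    (C D : ℝ) :
    (PropQ e C →
      (∀ A B : Finset ℕ, A.card = B.card → ‖∑ n ∈ A, e n‖ ≤ C * ‖∑ n ∈ B, e n‖) ∧
      (∀ (z : X) (M : Finset ℕ), ‖∑ n ∈ M, f n z • e n‖ ≤ C * ‖z‖)) ∧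
    ((∀ A B : Finset ℕ, A.card = B.card → ‖∑ n ∈ A, e n‖ ≤ D * ‖∑ n ∈ B, e n‖) →
      (∀ (z : X) (M : Finset ℕ), ‖∑ n ∈ M, f n z • e n‖ ≤ C * ‖z‖) →
      PropQ e (C * (1 + D))) :=
  stmt_14_general e f hbi hexp C D
end

section
/- If a Schauder basis B of a Banach space X satisfies ‖x − G_m(x)‖ ≤ C·D_m(x) for all x ∈ X and m ∈ ℕ, then B is C-suppression unconditional (i.e., ‖P_A(x)‖ ≤ C‖x‖ for all finite A and finitely supported x). -/
/-!
Given finite `A` and `x = ∑_{n ∈ B} c_n e_n`, set `Λ = B \ A` and add a constant `α` larger than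
twice every `|c_n|` to the coefficients on `Λ`. In `y = x + α 1_Λ` the set `Λ` is greedy, the greedy
residual `y - G_{|Λ|}(y)` is `P_A x`, and `x = y - α 1_Λ` is a competitor for `D_{|Λ|}(y)`.
Hence `‖P_A x‖ ≤ C D_{|Λ|}(y) ≤ C ‖x‖`; the last step needs `C ≥ 0`, which is the case `m = 0`
of the hypothesis at a basis vector.
-/

open Filter

/-- `Λ` is the set of indices of the `|Λ|` largest-in-modulus coefficients of `x`, ties
broken by smallest index (the natural greedy ordering), so that
`G_{|Λ|}(x) = ∑_{n ∈ Λ} f_n(x) e_n`. -/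
def IsGreedySet {X : Type*} [NormedAddCommGroup X] [NormedSpace ℝ X]
    (f : ℕ → X →L[ℝ] ℝ) (x : X) (Λ : Finset ℕ) : Prop :=
  ∀ n ∈ Λ, ∀ k ∉ Λ, |f k x| < |f n x| ∨ (|f k x| = |f n x| ∧ n < k)

namespace Finsupp

variable {ι : Type*} (c : ι →₀ ℝ)

theorem abs_apply_le_sum_abs (k : ι) : |c k| ≤ ∑ n ∈ c.support, |c n| := by
  by_cases hk : k ∈ c.support
  · exact Finset.single_le_sum (f := fun n => |c n|) (fun n _ => abs_nonneg _) hk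
  · simpa [notMem_support_iff.mp hk] using Finset.sum_nonneg fun n _ => abs_nonneg (c n)

theorem sum_smul_eq_sum_inter_support [DecidableEq ι] {M : Type*} [AddCommMonoid M]
    [Module ℝ M] (v : ι → M) (A : Finset ι) :
    ∑ n ∈ A, c n • v n = ∑ n ∈ c.support ∩ A, c n • v n :=
  (Finset.sum_subset Finset.inter_subset_right fun n _ hn => by simp_all).symm

end Finsupp

section Biorthogonal

variable {X : Type*} [NormedAddCommGroup X] [NormedSpace ℝ X]

/-- `D_m(x)`. -/
noncomputable def constApproxError (e : ℕ → X) (x : X) (m : ℕ) : ℝ :=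
  sInf {d : ℝ | ∃ (A : Finset ℕ) (α : ℝ), A.card = m ∧ d = ‖x - α • ∑ n ∈ A, e n‖}

theorem constApproxError_le (e : ℕ → X) (x : X) (A : Finset ℕ) (α : ℝ) :
    constApproxError e x A.card ≤ ‖x - α • ∑ n ∈ A, e n‖ :=
  csInf_le ⟨0, by rintro d ⟨-, -, -, rfl⟩; exact norm_nonneg _⟩ ⟨A, α, rfl, rfl⟩

theorem constApproxError_zero (e : ℕ → X) (x : X) : constApproxError e x 0 = ‖x‖ := by
  simp [constApproxError, Finset.card_eq_zero]

theorem isGreedySet_empty (f : ℕ → X →L[ℝ] ℝ) (x : X) : IsGreedySet f x ∅ := by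
  simp [IsGreedySet]

variable {ι : Type*} [DecidableEq ι] {e : ι → X} {f : ι → X →L[ℝ] ℝ}

theorem coeff_sum_smul (hbi : ∀ m n, f m (e n) = if m = n then 1 else 0)
    (s : Finset ι) (a : ι → ℝ) (k : ι) :
    f k (∑ n ∈ s, a n • e n) = if k ∈ s then a k else 0 := by
  simp [map_sum, hbi]

theorem coeff_sum_support_smul (hbi : ∀ m n, f m (e n) = if m = n then 1 else 0)
    (c : ι →₀ ℝ) (k : ι) : f k (∑ n ∈ c.support, c n • e n) = c k := by
  simp [coeff_sum_smul hbi, eq_comm]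

theorem coeff_add_smul_sum (hbi : ∀ m n, f m (e n) = if m = n then 1 else 0)
    (x : X) (α : ℝ) (s : Finset ι) (k : ι) :
    f k (x + α • ∑ n ∈ s, e n) = f k x + if k ∈ s then α else 0 := by
  simp [map_sum, hbi]

theorem sub_sum_coeff_add_smul_sum (hbi : ∀ m n, f m (e n) = if m = n then 1 else 0)
    (x : X) (α : ℝ) (s : Finset ι) :
    (x + α • ∑ n ∈ s, e n) - ∑ n ∈ s, f n (x + α • ∑ n ∈ s, e n) • e n =
      x - ∑ n ∈ s, f n x • e n := by
  have hsum : ∑ n ∈ s, f n (x + α • ∑ n ∈ s, e n) • e n =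
      ∑ n ∈ s, f n x • e n + α • ∑ n ∈ s, e n := by
    rw [Finset.sum_congr rfl fun n hn => by rw [coeff_add_smul_sum hbi, if_pos hn, add_smul],
      Finset.sum_add_distrib, Finset.smul_sum]
  rw [hsum]
  abel

theorem one_le_of_norm_le_mul_norm (hbi : ∀ m n, f m (e n) = if m = n then 1 else 0)
    (i : ι) {C : ℝ} (h : ‖e i‖ ≤ C * ‖e i‖) : 1 ≤ C := by
  have hne : e i ≠ 0 := fun h0 => by simpa [h0] using hbi i i
  exact le_of_mul_le_mul_right (by simpa using h) (norm_pos_iff.mpr hne)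

end Biorthogonal

theorem isGreedySet_add_smul_sum {X : Type*} [NormedAddCommGroup X] [NormedSpace ℝ X]
    {e : ℕ → X} {f : ℕ → X →L[ℝ] ℝ} (hbi : ∀ m n, f m (e n) = if m = n then 1 else 0)
    {x : X} {M α : ℝ} (hM : ∀ k, |f k x| ≤ M) (hα : 2 * M < α) (Λ : Finset ℕ) :
    IsGreedySet f (x + α • ∑ n ∈ Λ, e n) Λ := by
  intro n hn k hk
  left
  rw [coeff_add_smul_sum hbi, coeff_add_smul_sum hbi, if_pos hn, if_neg hk, add_zero]
  have hn' : -M ≤ f n x := neg_le_of_abs_le (hM n)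
  have hα' : f n x + α ≤ |f n x + α| := le_abs_self _
  linarith [hM k]

theorem stmt_16_general {X : Type*} [NormedAddCommGroup X] [NormedSpace ℝ X]
    (e : ℕ → X) (f : ℕ → X →L[ℝ] ℝ)
    (hbi : ∀ m n : ℕ, f m (e n) = if m = n then 1 else 0)
    (C : ℝ)
    (hG : ∀ (x : X) (m : ℕ) (Λ : Finset ℕ), Λ.card = m → IsGreedySet f x Λ →
      ‖x - ∑ n ∈ Λ, f n x • e n‖ ≤
        C * sInf {d : ℝ | ∃ (A : Finset ℕ) (α : ℝ), A.card = m ∧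
          d = ‖x - α • ∑ n ∈ A, e n‖}) :
    ∀ (c : ℕ →₀ ℝ) (A : Finset ℕ),
      ‖∑ n ∈ A, c n • e n‖ ≤ C * ‖∑ n ∈ c.support, c n • e n‖ := by
  have hC : 0 ≤ C := by
    have h0 := hG (e 0) 0 ∅ rfl (isGreedySet_empty f _)
    rw [← constApproxError, constApproxError_zero, Finset.sum_empty, sub_zero] at h0
    linarith [one_le_of_norm_le_mul_norm hbi 0 h0]
  intro c A
  set x := ∑ n ∈ c.support, c n • e n
  set Λ := c.support \ A
  set α := 2 * ∑ n ∈ c.support, |c n| + 1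
  have hcoeff : ∀ k, f k x = c k := coeff_sum_support_smul hbi c
  have hbound : ∀ k, |f k x| ≤ ∑ n ∈ c.support, |c n| := fun k => by
    rw [hcoeff]
    exact c.abs_apply_le_sum_abs k
  have hresidual : x - ∑ n ∈ Λ, f n x • e n = ∑ n ∈ A, c n • e n := by
    simp only [hcoeff, Λ, x]
    rw [c.sum_smul_eq_sum_inter_support e A, ← Finset.sum_inter_add_sum_sdiff c.support A]
    abel
  have hgreedy := hG _ _ Λ rfl (isGreedySet_add_smul_sum hbi hbound (lt_add_one _) Λ)
  rw [← constApproxError, sub_sum_coeff_add_smul_sum hbi, hresidual] at hgreedy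
  calc ‖∑ n ∈ A, c n • e n‖ ≤ C * constApproxError e (x + α • ∑ n ∈ Λ, e n) Λ.card := hgreedy
    _ ≤ C * ‖x‖ := by
      gcongr
      simpa using constApproxError_le e (x + α • ∑ n ∈ Λ, e n) Λ α

/-- If `‖x - G_m(x)‖ ≤ C D_m(x)` for all `x` and `m`, then the basis is `C`-suppression
unconditional: `‖P_A(x)‖ ≤ C ‖x‖` for all finite `A` and finitely supported `x`. -/
theorem stmt_16 {X : Type*} [NormedAddCommGroup X] [NormedSpace ℝ X] [CompleteSpace X]
    (e : ℕ → X) (f : ℕ → X →L[ℝ] ℝ)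
    (hbi : ∀ m n : ℕ, f m (e n) = if m = n then 1 else 0)
    (hexp : ∀ z : X, Tendsto (fun N => ∑ n ∈ Finset.range N, f n z • e n) atTop (nhds z))
    (C : ℝ)
    (hG : ∀ (x : X) (m : ℕ) (Λ : Finset ℕ), Λ.card = m → IsGreedySet f x Λ →
      ‖x - ∑ n ∈ Λ, f n x • e n‖ ≤
        C * sInf {d : ℝ | ∃ (A : Finset ℕ) (α : ℝ), A.card = m ∧
          d = ‖x - α • ∑ n ∈ A, e n‖}) :
    ∀ (c : ℕ →₀ ℝ) (A : Finset ℕ),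
      ‖∑ n ∈ A, c n • e n‖ ≤ C * ‖∑ n ∈ c.support, c n • e n‖ :=
  stmt_16_general e f hbi C hG
end

section
/- If a Schauder basis B of a Banach space X satisfies ‖x − G_m(x)‖ ≤ C·D_m(x) for all x ∈ X and m ∈ ℕ, then B is C-democratic: ‖1_B‖ ≤ C‖1_A‖ for all finite sets A, B with |A| = |B|. -/
/-!
Take `x = (1 + ε) 1_{A \ B} + 1_B`. Its `|A \ B|` largest coefficients sit on `A \ B`, so the
greedy error is `‖1_B‖`, while removing `1_{B \ A}` (a constant multiple of an indicator of the
same size) leaves `1_A + ε 1_{A \ B}`. Hence `‖1_B‖ ≤ C (‖1_A‖ + ε ‖1_{A \ B}‖)`; let `ε → 0`.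
-/

open Filter Topology

section Biorthogonal

variable {X : Type*} [NormedAddCommGroup X] [NormedSpace ℝ X]
  {e : ℕ → X} {f : ℕ → X →L[ℝ] ℝ}

theorem coord_sum_basis (hbi : ∀ m n : ℕ, f m (e n) = if m = n then 1 else 0)
    (S : Finset ℕ) (k : ℕ) : f k (∑ n ∈ S, e n) = if k ∈ S then 1 else 0 := by
  simp [map_sum, hbi]

theorem coord_smul_sum_add_sum (hbi : ∀ m n : ℕ, f m (e n) = if m = n then 1 else 0)
    {S T : Finset ℕ} (hST : Disjoint S T) (t : ℝ) (k : ℕ) :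
    f k (t • ∑ n ∈ S, e n + ∑ n ∈ T, e n) = if k ∈ S then t else if k ∈ T then 1 else 0 := by
  rw [map_add, map_smul, coord_sum_basis hbi, coord_sum_basis hbi]
  by_cases hS : k ∈ S
  · simp [hS, Finset.disjoint_left.mp hST hS]
  · simp [hS]

theorem isGreedySet_smul_sum_add_sum (hbi : ∀ m n : ℕ, f m (e n) = if m = n then 1 else 0)
    {S T : Finset ℕ} (hST : Disjoint S T) {t : ℝ} (ht : 1 < t) :
    IsGreedySet f (t • ∑ n ∈ S, e n + ∑ n ∈ T, e n) S := by
  intro n hn k hk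
  left
  rw [coord_smul_sum_add_sum hbi hST, coord_smul_sum_add_sum hbi hST, if_pos hn, if_neg hk,
    abs_of_pos (zero_lt_one.trans ht)]
  split_ifs <;> simp only [abs_one, abs_zero] <;> linarith

theorem sub_greedySum_smul_sum_add_sum (hbi : ∀ m n : ℕ, f m (e n) = if m = n then 1 else 0)
    {S T : Finset ℕ} (hST : Disjoint S T) (t : ℝ) :
    let x := t • ∑ n ∈ S, e n + ∑ n ∈ T, e n
    x - ∑ n ∈ S, f n x • e n = ∑ n ∈ T, e n := by
  intro x
  have hgreedy : ∑ n ∈ S, f n x • e n = t • ∑ n ∈ S, e n := by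
    rw [Finset.smul_sum]
    exact Finset.sum_congr rfl fun n hn => by rw [coord_smul_sum_add_sum hbi hST, if_pos hn]
  rw [hgreedy, add_sub_cancel_left]

end Biorthogonal

section GreedyBound

variable {X : Type*} [NormedAddCommGroup X] [NormedSpace ℝ X]

/-- The values `‖x - α 1_A‖` with `|A| = m`; its infimum is `D_m(x)`. -/
def approxErrors (e : ℕ → X) (x : X) (m : ℕ) : Set ℝ :=
  {d : ℝ | ∃ (A : Finset ℕ) (α : ℝ), A.card = m ∧ d = ‖x - α • ∑ n ∈ A, e n‖}

theorem sInf_approxErrors_le (e : ℕ → X) (x : X) {A : Finset ℕ} {m : ℕ} (hA : A.card = m)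
    (α : ℝ) : sInf (approxErrors e x m) ≤ ‖x - α • ∑ n ∈ A, e n‖ :=
  csInf_le ⟨0, by rintro d ⟨A, α, -, rfl⟩; exact norm_nonneg _⟩ ⟨A, α, hA, rfl⟩

theorem approxErrors_zero (e : ℕ → X) (x : X) : approxErrors e x 0 = {‖x‖} := by
  ext d
  simp [approxErrors, Finset.card_eq_zero]

def GreedyBound (e : ℕ → X) (f : ℕ → X →L[ℝ] ℝ) (C : ℝ) : Prop :=
  ∀ (x : X) (m : ℕ) (Λ : Finset ℕ), Λ.card = m → IsGreedySet f x Λ →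
    ‖x - ∑ n ∈ Λ, f n x • e n‖ ≤ C * sInf (approxErrors e x m)

variable {e : ℕ → X} {f : ℕ → X →L[ℝ] ℝ} {C : ℝ}

theorem GreedyBound.one_le (hG : GreedyBound e f C) {x : X} (hx : x ≠ 0) : 1 ≤ C := by
  have h := hG x 0 ∅ rfl (fun n hn => absurd hn (Finset.notMem_empty n))
  rw [approxErrors_zero, csInf_singleton] at h
  simp only [Finset.sum_empty, sub_zero] at h
  exact (le_mul_iff_one_le_left (norm_pos_iff.mpr hx)).mp h

theorem GreedyBound.norm_sum_le (hbi : ∀ m n : ℕ, f m (e n) = if m = n then 1 else 0)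
    (hG : GreedyBound e f C) (hC : 0 ≤ C) {A B : Finset ℕ} (hAB : A.card = B.card)
    {ε : ℝ} (hε : 0 < ε) :
    ‖∑ n ∈ B, e n‖ ≤ C * (‖∑ n ∈ A, e n‖ + ε * ‖∑ n ∈ A \ B, e n‖) := by
  have hdisj : Disjoint (A \ B) B := Finset.sdiff_disjoint
  set x := (1 + ε) • ∑ n ∈ A \ B, e n + ∑ n ∈ B, e n
  have hgreedy := hG x _ (A \ B) rfl (isGreedySet_smul_sum_add_sum hbi hdisj (by linarith))
  rw [sub_greedySum_smul_sum_add_sum hbi hdisj] at hgreedy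
  have hcompeting : x - (1 : ℝ) • ∑ n ∈ B \ A, e n =
      ∑ n ∈ A, e n + ε • ∑ n ∈ A \ B, e n := by
    have hsdiff := Finset.sum_sdiff_sub_sum_sdiff (s₁ := A) (s₂ := B) (f := e)
    simp only [x, one_smul, add_smul]
    linear_combination (norm := abel) -hsdiff
  calc ‖∑ n ∈ B, e n‖
      ≤ C * sInf (approxErrors e x (A \ B).card) := hgreedy
    _ ≤ C * ‖x - (1 : ℝ) • ∑ n ∈ B \ A, e n‖ :=
        mul_le_mul_of_nonneg_left
          (sInf_approxErrors_le e x (Finset.card_sdiff_comm hAB.symm) 1) hC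
    _ ≤ C * (‖∑ n ∈ A, e n‖ + ε * ‖∑ n ∈ A \ B, e n‖) := by
        rw [hcompeting]
        refine mul_le_mul_of_nonneg_left ((norm_add_le _ _).trans_eq ?_) hC
        rw [norm_smul, Real.norm_of_nonneg hε.le]

end GreedyBound

theorem stmt_17_general {X : Type*} [NormedAddCommGroup X] [NormedSpace ℝ X]
    (e : ℕ → X) (f : ℕ → X →L[ℝ] ℝ)
    (hbi : ∀ m n : ℕ, f m (e n) = if m = n then 1 else 0)
    (C : ℝ)
    (hG : ∀ (x : X) (m : ℕ) (Λ : Finset ℕ), Λ.card = m → IsGreedySet f x Λ →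
      ‖x - ∑ n ∈ Λ, f n x • e n‖ ≤
        C * sInf {d : ℝ | ∃ (A : Finset ℕ) (α : ℝ), A.card = m ∧
          d = ‖x - α • ∑ n ∈ A, e n‖}) :
    ∀ A B : Finset ℕ, A.card = B.card → ‖∑ n ∈ B, e n‖ ≤ C * ‖∑ n ∈ A, e n‖ := by
  intro A B hAB
  have hG : GreedyBound e f C := hG
  have he0 : e 0 ≠ 0 := fun h => by simpa [h] using hbi 0 0
  have hC : 0 ≤ C := zero_le_one.trans (hG.one_le he0)
  have hlim : Tendsto (fun ε : ℝ => C * (‖∑ n ∈ A, e n‖ + ε * ‖∑ n ∈ A \ B, e n‖))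
      (𝓝[>] 0) (𝓝 (C * ‖∑ n ∈ A, e n‖)) := by
    have hcont : Continuous fun ε : ℝ => C * (‖∑ n ∈ A, e n‖ + ε * ‖∑ n ∈ A \ B, e n‖) := by
      fun_prop
    simpa using (hcont.tendsto 0).mono_left nhdsWithin_le_nhds
  exact ge_of_tendsto hlim
    (eventually_nhdsWithin_of_forall fun ε hε => hG.norm_sum_le hbi hC hAB hε)

/-- If `‖x - G_m(x)‖ ≤ C D_m(x)` for all `x` and `m`, then the basis is `C`-democratic:
`‖1_B‖ ≤ C ‖1_A‖` whenever `|A| = |B|`. -/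
theorem stmt_17 {X : Type*} [NormedAddCommGroup X] [NormedSpace ℝ X] [CompleteSpace X]
    (e : ℕ → X) (f : ℕ → X →L[ℝ] ℝ)
    (hbi : ∀ m n : ℕ, f m (e n) = if m = n then 1 else 0)
    (hexp : ∀ z : X, Tendsto (fun N => ∑ n ∈ Finset.range N, f n z • e n) atTop (nhds z))
    (C : ℝ)
    (hG : ∀ (x : X) (m : ℕ) (Λ : Finset ℕ), Λ.card = m → IsGreedySet f x Λ →
      ‖x - ∑ n ∈ Λ, f n x • e n‖ ≤
        C * sInf {d : ℝ | ∃ (A : Finset ℕ) (α : ℝ), A.card = m ∧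
          d = ‖x - α • ∑ n ∈ A, e n‖}) :
    ∀ A B : Finset ℕ, A.card = B.card → ‖∑ n ∈ B, e n‖ ≤ C * ‖∑ n ∈ A, e n‖ :=
  stmt_17_general e f hbi C hG
end
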